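/- arXiv:math/0203077 — 5 statements merged into one kernel-verified Lean document; each statement's English description precedes it below -/
import Mathlib

section
/- Let A_0 and A be connection 1-forms on U and let g : U → GL_N(ℝ) be a gauge transformation that stabilizes A_0, i.e. g A_{0,i} g⁻¹ − (∂_i g) g⁻¹ = A_{0,i} on U for every i. If A is in Coulomb gauge relative to A_0, i.e. Σ_{i=1}^{n} ( ∂_i (A_i − A_{0,i}) + [A_{0,i}, A_i − A_{0,i}] ) = 0 on U, then g(A) is also in Coulomb gauge relative to A_0: Σ_{i=1}^{n} ( ∂_i (g(A)_i − A_{0,i}) + [A_{0,i}, g(A)_i − A_{0,i}] ) = 0 on U. -/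
open Matrix Set

attribute [local instance] Matrix.normedAddCommGroup Matrix.normedSpace

/-- Partial derivative in the `i`-th coordinate direction of a matrix-valued map. -/
noncomputable def pd {n N : ℕ} (i : Fin n)
    (f : (Fin n → ℝ) → Matrix (Fin N) (Fin N) ℝ) (x : Fin n → ℝ) :
    Matrix (Fin N) (Fin N) ℝ :=
  fderiv ℝ f x (Pi.single i 1)

/-- Matrix commutator `[X, Y] = XY - YX`. -/
def mbracket {N : ℕ} (X Y : Matrix (Fin N) (Fin N) ℝ) : Matrix (Fin N) (Fin N) ℝ :=
  X * Y - Y * X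

/-- Gauge action `g(A)_i = g A_i g⁻¹ - (∂_i g) g⁻¹`. -/
noncomputable def gaugeAct {n N : ℕ} (g : (Fin n → ℝ) → Matrix (Fin N) (Fin N) ℝ)
    (A : Fin n → (Fin n → ℝ) → Matrix (Fin N) (Fin N) ℝ)
    (i : Fin n) (x : Fin n → ℝ) : Matrix (Fin N) (Fin N) ℝ :=
  g x * A i x * (g x)⁻¹ - pd i g x * (g x)⁻¹

section Aux

variable {n N : ℕ}

lemma entrySmooth {U : Set (Fin n → ℝ)} {f : (Fin n → ℝ) → Matrix (Fin N) (Fin N) ℝ}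
    (hf : ContDiffOn ℝ (⊤ : ℕ∞) f U) (i j : Fin N) :
    ContDiffOn ℝ (⊤ : ℕ∞) (fun x => f x i j) U :=
  contDiffOn_pi.mp (contDiffOn_pi.mp hf i) j

lemma smoothOfEntries {U : Set (Fin n → ℝ)} {f : (Fin n → ℝ) → Matrix (Fin N) (Fin N) ℝ}
    (hf : ∀ i j, ContDiffOn ℝ (⊤ : ℕ∞) (fun x => f x i j) U) : ContDiffOn ℝ (⊤ : ℕ∞) f U :=
  contDiffOn_pi.mpr fun i => contDiffOn_pi.mpr (hf i)

lemma smoothDet {U : Set (Fin n → ℝ)} {f : (Fin n → ℝ) → Matrix (Fin N) (Fin N) ℝ}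
    (hf : ContDiffOn ℝ (⊤ : ℕ∞) f U) :
    ContDiffOn ℝ (⊤ : ℕ∞) (fun x => (f x).det) U := by
  have : (fun x => (f x).det)
      = fun x => ∑ σ : Equiv.Perm (Fin N), ((Equiv.Perm.sign σ : ℤ) : ℝ) * ∏ i, f x (σ i) i := by
    funext x; rw [Matrix.det_apply]; congr 1; funext σ
    simp [Units.smul_def, zsmul_eq_mul]
  rw [this]
  exact ContDiffOn.sum fun σ _ =>
    (contDiffOn_const.mul (contDiffOn_prod fun i _ => entrySmooth hf (σ i) i))

lemma smoothAdjugate {U : Set (Fin n → ℝ)} {f : (Fin n → ℝ) → Matrix (Fin N) (Fin N) ℝ}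
    (hf : ContDiffOn ℝ (⊤ : ℕ∞) f U) :
    ContDiffOn ℝ (⊤ : ℕ∞) (fun x => (f x).adjugate) U := by
  apply smoothOfEntries
  intro i j
  have : (fun x => (f x).adjugate i j)
      = fun x => ((fun x => (f x).updateRow j (Pi.single i 1)) x).det := by
    funext x; rw [Matrix.adjugate_apply]
  rw [this]
  apply smoothDet
  apply smoothOfEntries
  intro k l
  rcases eq_or_ne k j with rfl | hk
  · simpa using contDiffOn_const
  · have : (fun x => (f x).updateRow j (Pi.single i 1) k l) = fun x => f x k l := by
      funext x; rw [Matrix.updateRow_ne hk]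
    rw [this]; exact entrySmooth hf k l

lemma smoothInv {U : Set (Fin n → ℝ)} {g : (Fin n → ℝ) → Matrix (Fin N) (Fin N) ℝ}
    (hg : ContDiffOn ℝ (⊤ : ℕ∞) g U)
    (hginv : ∀ x ∈ U, IsUnit (g x)) : ContDiffOn ℝ (⊤ : ℕ∞) (fun x => (g x)⁻¹) U := by
  have heq : ∀ x : Fin n → ℝ, (g x)⁻¹ = ((g x).det)⁻¹ • (g x).adjugate := by
    intro x; rw [Matrix.inv_def, Ring.inverse_eq_inv']
  simp only [heq]
  apply ContDiffOn.fun_smul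
  · apply ContDiffOn.inv (smoothDet hg)
    intro x hx
    exact ((Matrix.isUnit_iff_isUnit_det _).mp (hginv x hx)).ne_zero
  · exact smoothAdjugate hg

/-- Matrix multiplication as a continuous bilinear map. -/
noncomputable def mulL (N : ℕ) :
    Matrix (Fin N) (Fin N) ℝ →L[ℝ] Matrix (Fin N) (Fin N) ℝ →L[ℝ] Matrix (Fin N) (Fin N) ℝ :=
  LinearMap.toContinuousLinearMap
    ((LinearMap.toContinuousLinearMap :
        (Matrix (Fin N) (Fin N) ℝ →ₗ[ℝ] Matrix (Fin N) (Fin N) ℝ)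
          ≃ₗ[ℝ] (Matrix (Fin N) (Fin N) ℝ →L[ℝ] Matrix (Fin N) (Fin N) ℝ)).toLinearMap.comp
      (LinearMap.mul ℝ (Matrix (Fin N) (Fin N) ℝ)))

@[simp] lemma mulL_apply (a b : Matrix (Fin N) (Fin N) ℝ) : mulL N a b = a * b := rfl

lemma isBBM_mul :
    IsBoundedBilinearMap ℝ
      (fun p : Matrix (Fin N) (Fin N) ℝ × Matrix (Fin N) (Fin N) ℝ => p.1 * p.2) :=
  (mulL N).isBoundedBilinearMap

lemma HasFDerivAt.matmul {f g : (Fin n → ℝ) → Matrix (Fin N) (Fin N) ℝ}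
    {f' g' : (Fin n → ℝ) →L[ℝ] Matrix (Fin N) (Fin N) ℝ} {x : Fin n → ℝ}
    (hf : HasFDerivAt f f' x) (hg : HasFDerivAt g g' x) :
    HasFDerivAt (fun y => f y * g y)
      ((mulL N (f x)).comp g'
        + @id ((Fin n → ℝ) →L[ℝ] Matrix (Fin N) (Fin N) ℝ) (((mulL N).flip (g x)).comp f')) x := by
  have h := (isBBM_mul (N := N)).hasFDerivAt (f x, g x) |>.comp x (hf.prodMk hg)
  convert h using 1
  all_goals rfl

lemma DifferentiableAt.matmul {f g : (Fin n → ℝ) → Matrix (Fin N) (Fin N) ℝ} {x : Fin n → ℝ}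
    (hf : DifferentiableAt ℝ f x) (hg : DifferentiableAt ℝ g x) :
    DifferentiableAt ℝ (fun y => f y * g y) x :=
  (HasFDerivAt.matmul hf.hasFDerivAt hg.hasFDerivAt).differentiableAt

lemma pd_mul {f g : (Fin n → ℝ) → Matrix (Fin N) (Fin N) ℝ} {x : Fin n → ℝ} (i : Fin n)
    (hf : DifferentiableAt ℝ f x) (hg : DifferentiableAt ℝ g x) :
    pd i (fun y => f y * g y) x = f x * pd i g x + pd i f x * g x := by
  unfold pd
  rw [(HasFDerivAt.matmul hf.hasFDerivAt hg.hasFDerivAt).fderiv]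
  simp [id]
  rfl

lemma pd_congr {U : Set (Fin n → ℝ)} (hU : IsOpen U)
    {f g : (Fin n → ℝ) → Matrix (Fin N) (Fin N) ℝ} {x : Fin n → ℝ} (hx : x ∈ U)
    (h : ∀ y ∈ U, f y = g y) (i : Fin n) : pd i f x = pd i g x := by
  unfold pd
  rw [Filter.EventuallyEq.fderiv_eq (Filter.eventually_of_mem (hU.mem_nhds hx) h)]

/-- The key noncommutative-ring identity. -/
lemma key {R : Type*} [Ring R] (G H A0 a a' : R) (hGH : G * H = 1) (hHG : H * G = 1) :
    (G * a * (-(H * (G * A0 - A0 * G) * H)) + (G * a' + (G * A0 - A0 * G) * a) * H)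
      + (A0 * (G * a * H) - (G * a * H) * A0)
      = G * (a' + (A0 * a - a * A0)) * H := by
  have h1 : ∀ X : R, H * (G * X) = X := fun X => by rw [← mul_assoc, hHG, one_mul]
  have h2 : ∀ X : R, G * (H * X) = X := fun X => by rw [← mul_assoc, hGH, one_mul]
  simp only [mul_sub, sub_mul, mul_add, add_mul, mul_assoc, neg_mul, mul_neg, h1, h2, hGH, hHG,
    mul_one, one_mul]
  abel

end Aux

/-- if `g` stabilizes `A₀` and `A` is in Coulomb gaugeAct relative to `A₀`,
then `g(A)` is in Coulomb gaugeAct relative to `A₀`. -/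
theorem stabilizer_preserves_coulomb_gauge
    {n N : ℕ} (hn : 0 < n) (hN : 0 < N)
    (U : Set (Fin n → ℝ)) (hU : IsOpen U)
    (A0 A : Fin n → (Fin n → ℝ) → Matrix (Fin N) (Fin N) ℝ)
    (g : (Fin n → ℝ) → Matrix (Fin N) (Fin N) ℝ)
    (hA0 : ∀ i, ContDiffOn ℝ (⊤ : ℕ∞) (A0 i) U)
    (hA : ∀ i, ContDiffOn ℝ (⊤ : ℕ∞) (A i) U)
    (hg : ContDiffOn ℝ (⊤ : ℕ∞) g U)
    (hginv : ∀ x ∈ U, IsUnit (g x))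
    (hstab : ∀ x ∈ U, ∀ i, gaugeAct g A0 i x = A0 i x)
    (hcoulomb : ∀ x ∈ U,
      ∑ i, (pd i (fun y => A i y - A0 i y) x + mbracket (A0 i x) (A i x - A0 i x)) = 0) :
    ∀ x ∈ U,
      ∑ i, (pd i (fun y => gaugeAct g A i y - A0 i y) x
        + mbracket (A0 i x) (gaugeAct g A i x - A0 i x)) = 0 := by
  intro x hx
  -- basic unit facts
  have hgh : ∀ y ∈ U, g y * (g y)⁻¹ = 1 := fun y hy =>
    Matrix.mul_nonsing_inv _ ((Matrix.isUnit_iff_isUnit_det _).mp (hginv y hy))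
  have hhg : ∀ y ∈ U, (g y)⁻¹ * g y = 1 := fun y hy =>
    Matrix.nonsing_inv_mul _ ((Matrix.isUnit_iff_isUnit_det _).mp (hginv y hy))
  -- differentiability at points of U
  have dAt : ∀ {f : (Fin n → ℝ) → Matrix (Fin N) (Fin N) ℝ},
      ContDiffOn ℝ (⊤ : ℕ∞) f U → ∀ y ∈ U, DifferentiableAt ℝ f y := by
    intro f hf y hy
    exact (hf.contDiffAt (hU.mem_nhds hy)).differentiableAt (by simp)
  have dg : ∀ y ∈ U, DifferentiableAt ℝ g y := dAt hg
  have dh : ∀ y ∈ U, DifferentiableAt ℝ (fun y => (g y)⁻¹) y := dAt (smoothInv hg hginv)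
  have da : ∀ i, ∀ y ∈ U, DifferentiableAt ℝ (fun y => A i y - A0 i y) y := fun i =>
    dAt ((hA i).sub (hA0 i))
  -- derivative of g from the stabilizer equation
  have pdg : ∀ i, pd i g x = g x * A0 i x - A0 i x * g x := by
    intro i
    have hs := hstab x hx i
    unfold gaugeAct at hs
    have h2 := congrArg (fun X => X * g x) hs
    simp only [sub_mul, mul_assoc, hhg x hx, mul_one] at h2
    -- h2 : g x * A0 i x - pd i g x = A0 i x * g x
    rw [sub_eq_iff_eq_add] at h2
    rw [h2]
    abel
  -- derivative of g⁻¹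
  have pdh : ∀ i, pd i (fun y => (g y)⁻¹) x
      = -((g x)⁻¹ * (g x * A0 i x - A0 i x * g x) * (g x)⁻¹) := by
    intro i
    have hone : pd i (fun y => g y * (g y)⁻¹) x = 0 := by
      have : pd i (fun y => g y * (g y)⁻¹) x
          = pd i (fun _ => (1 : Matrix (Fin N) (Fin N) ℝ)) x := pd_congr hU hx hgh i
      rw [this]
      simp [pd, fderiv_const]
    rw [pd_mul i (dg x hx) (dh x hx)] at hone
    have h2 := congrArg (fun X => (g x)⁻¹ * X) hone
    simp only [mul_add, ← mul_assoc, hhg x hx, one_mul, mul_zero] at h2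
    rw [pdg i] at h2
    rw [eq_neg_iff_add_eq_zero, ← h2]
  -- the gauged connection minus A0 equals g (A - A0) g⁻¹ on U
  have hgauge : ∀ i, ∀ y ∈ U, gaugeAct g A i y - A0 i y
      = g y * (A i y - A0 i y) * (g y)⁻¹ := by
    intro i y hy
    have hs := hstab y hy i
    unfold gaugeAct at hs ⊢
    have hpd : pd i g y * (g y)⁻¹ = g y * A0 i y * (g y)⁻¹ - A0 i y := by
      rw [sub_eq_iff_eq_add] at hs
      rw [hs]; abel
    rw [hpd]
    simp only [mul_sub, sub_mul]
    abel
  -- compute each summand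
  have hterm : ∀ i,
      pd i (fun y => gaugeAct g A i y - A0 i y) x
        + mbracket (A0 i x) (gaugeAct g A i x - A0 i x)
      = g x * (pd i (fun y => A i y - A0 i y) x + mbracket (A0 i x) (A i x - A0 i x))
          * (g x)⁻¹ := by
    intro i
    have e1 : pd i (fun y => gaugeAct g A i y - A0 i y) x
        = pd i (fun y => (g y * (A i y - A0 i y)) * (g y)⁻¹) x :=
      pd_congr hU hx (fun y hy => by rw [hgauge i y hy]) i
    have dga : DifferentiableAt ℝ (fun y => g y * (A i y - A0 i y)) x :=
      (dg x hx).matmul (da i x hx)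
    have e2 : pd i (fun y => (g y * (A i y - A0 i y)) * (g y)⁻¹) x
        = (g x * (A i x - A0 i x)) * pd i (fun y => (g y)⁻¹) x
            + pd i (fun y => g y * (A i y - A0 i y)) x * (g x)⁻¹ :=
      pd_mul i dga (dh x hx)
    have e3 : pd i (fun y => g y * (A i y - A0 i y)) x
        = g x * pd i (fun y => A i y - A0 i y) x + pd i g x * (A i x - A0 i x) :=
      pd_mul i (dg x hx) (da i x hx)
    rw [e1, e2, e3, pdg i, pdh i, hgauge i x hx]
    unfold mbracket
    exact key (g x) ((g x)⁻¹) (A0 i x) (A i x - A0 i x)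
      (pd i (fun y => A i y - A0 i y) x) (hgh x hx) (hhg x hx)
  calc ∑ i, (pd i (fun y => gaugeAct g A i y - A0 i y) x
        + mbracket (A0 i x) (gaugeAct g A i x - A0 i x))
      = ∑ i, g x * (pd i (fun y => A i y - A0 i y) x + mbracket (A0 i x) (A i x - A0 i x))
          * (g x)⁻¹ := Finset.sum_congr rfl fun i _ => hterm i
    _ = g x * (∑ i, (pd i (fun y => A i y - A0 i y) x + mbracket (A0 i x) (A i x - A0 i x)))
          * (g x)⁻¹ := by rw [Finset.mul_sum, Finset.sum_mul]
    _ = 0 := by rw [hcoulomb x hx, mul_zero, zero_mul]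
end

section
/- Let A_0 be a connection 1-form on U, let T > 0, and let β_0 : [0,T] × U → M_N(ℝ) be jointly smooth such that for every t ∈ [0,T] and every i, ∂_i β_0(t,·) + [A_{0,i}, β_0(t,·)] = 0 on U. Let g : [0,T] × U → M_N(ℝ) be jointly smooth with g(0,x) = Id for all x ∈ U and ∂_t g(t,x) = g(t,x) β_0(t,x) for all (t,x). Then for every (t,x) ∈ [0,T] × U and every i, ∂_i g(t,x) + [A_{0,i}(x), g(t,x)] = 0; equivalently, at every point where g(t,·) is invertible, g(t,·) stabilizes A_0, i.e. g A_{0,i} g⁻¹ − (∂_i g) g⁻¹ = A_{0,i}. -/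
open Matrix Set
open scoped Topology
set_option maxHeartbeats 1000000

attribute [local instance] Matrix.normedAddCommGroup Matrix.normedSpace

lemma mat_norm_mul_le {N : ℕ} (A B : Matrix (Fin N) (Fin N) ℝ) :
    ‖A * B‖ ≤ (N : ℝ) * ‖A‖ * ‖B‖ := by
  rw [Matrix.norm_le_iff (by positivity)]
  intro i j
  calc ‖(A * B) i j‖ = ‖∑ k, A i k * B k j‖ := by rw [Matrix.mul_apply]
    _ ≤ ∑ k, ‖A i k * B k j‖ := norm_sum_le _ _
    _ ≤ ∑ _k : Fin N, ‖A‖ * ‖B‖ := Finset.sum_le_sum fun k _ => by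
        rw [norm_mul]
        exact mul_le_mul (Matrix.norm_entry_le_entrywise_sup_norm A)
          (Matrix.norm_entry_le_entrywise_sup_norm B) (norm_nonneg _) (norm_nonneg _)
    _ = (N : ℝ) * ‖A‖ * ‖B‖ := by simp [Finset.sum_const, mul_assoc]

lemma mat_mul_ibbm {N : ℕ} :
    IsBoundedBilinearMap ℝ (fun p : Matrix (Fin N) (Fin N) ℝ × Matrix (Fin N) (Fin N) ℝ =>
      p.1 * p.2) where
  add_left _ _ _ := add_mul _ _ _
  smul_left _ _ _ := smul_mul_assoc _ _ _
  add_right _ _ _ := mul_add _ _ _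
  smul_right _ _ _ := mul_smul_comm _ _ _
  bound := ⟨(N : ℝ) + 1, by positivity, fun x y => by
    have := mat_norm_mul_le x y
    nlinarith [norm_nonneg x, norm_nonneg y]⟩

/-- the solution of `∂_t g = g β₀`, `g(0,·) = Id`, with `β₀(t,·)`
infinitesimally stabilizing `A₀` (i.e. `d_{A₀} β₀ = 0`) stays in the stabilizer of `A₀`:
`∂_i g + [A₀ᵢ, g] = 0`, and where `g(t,·)` is invertible, `g(t,·)(A₀) = A₀`. -/
theorem ode_solution_stays_in_stabilizer
    {n N : ℕ} (hn : 0 < n) (hN : 0 < N)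
    (U : Set (Fin n → ℝ)) (hU : IsOpen U)
    (T : ℝ) (hT : 0 < T)
    (A0 : Fin n → (Fin n → ℝ) → Matrix (Fin N) (Fin N) ℝ)
    (hA0 : ∀ i, ContDiffOn ℝ (⊤ : ℕ∞) (A0 i) U)
    (β0 : ℝ → (Fin n → ℝ) → Matrix (Fin N) (Fin N) ℝ)
    (hβ0 : ContDiffOn ℝ (⊤ : ℕ∞) (fun p : ℝ × (Fin n → ℝ) => β0 p.1 p.2) (Icc 0 T ×ˢ U))
    (hker : ∀ t ∈ Icc (0:ℝ) T, ∀ x ∈ U, ∀ i,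
      pd i (β0 t) x + mbracket (A0 i x) (β0 t x) = 0)
    (g : ℝ → (Fin n → ℝ) → Matrix (Fin N) (Fin N) ℝ)
    (hg : ContDiffOn ℝ (⊤ : ℕ∞) (fun p : ℝ × (Fin n → ℝ) => g p.1 p.2) (Icc 0 T ×ˢ U))
    (hg0 : ∀ x ∈ U, g 0 x = 1)
    (hode : ∀ t ∈ Icc (0:ℝ) T, ∀ x ∈ U,
      deriv (fun s => g s x) t = g t x * β0 t x) :
    (∀ t ∈ Icc (0:ℝ) T, ∀ x ∈ U, ∀ i,
      pd i (g t) x + mbracket (A0 i x) (g t x) = 0) ∧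
    (∀ t ∈ Icc (0:ℝ) T, ∀ x ∈ U, IsUnit (g t x) → ∀ i,
      g t x * A0 i x * (g t x)⁻¹ - pd i (g t) x * (g t x)⁻¹ = A0 i x) := by
  have key : ∀ x ∈ U, ∀ i : Fin n, ∀ t ∈ Icc (0:ℝ) T,
      pd i (g t) x + mbracket (A0 i x) (g t x) = 0 := by
    intro x hx i
    set v : Fin n → ℝ := Pi.single i 1 with hv
    set G : ℝ × (Fin n → ℝ) → Matrix (Fin N) (Fin N) ℝ := fun p => g p.1 p.2 with hG
    set B : ℝ × (Fin n → ℝ) → Matrix (Fin N) (Fin N) ℝ := fun p => β0 p.1 p.2 with hB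
    set S : Set (ℝ × (Fin n → ℝ)) := Icc 0 T ×ˢ U with hS
    set V : Set (ℝ × (Fin n → ℝ)) := Ioo 0 T ×ˢ U with hV
    have hVopen : IsOpen V := isOpen_Ioo.prod hU
    have hVS : V ⊆ S := prod_mono Ioo_subset_Icc_self subset_rfl
    have hSnhds : ∀ p ∈ V, S ∈ 𝓝 p := fun p hp =>
      Filter.mem_of_superset (hVopen.mem_nhds hp) hVS
    have hGat : ∀ p ∈ V, ContDiffAt ℝ (⊤ : ℕ∞) G p := fun p hp => hg.contDiffAt (hSnhds p hp)
    have hBat : ∀ p ∈ V, ContDiffAt ℝ (⊤ : ℕ∞) B p := fun p hp => hβ0.contDiffAt (hSnhds p hp)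
    set D : ℝ × (Fin n → ℝ) → (ℝ × (Fin n → ℝ)) →L[ℝ] Matrix (Fin N) (Fin N) ℝ :=
      fun p => fderiv ℝ G p with hD
    have hDG : ∀ p ∈ V, HasFDerivAt G (D p) p := fun p hp =>
      ((hGat p hp).differentiableAt (by simp)).hasFDerivAt
    have hcurve : ∀ (y : Fin n → ℝ) (t : ℝ),
        HasDerivAt (fun s : ℝ => ((s, y) : ℝ × (Fin n → ℝ))) (1, (0 : Fin n → ℝ)) t :=
      fun y t => (hasDerivAt_id t).prodMk (hasDerivAt_const t y)
    have hDt : ∀ p ∈ V, D p ((1 : ℝ), (0 : Fin n → ℝ)) = G p * B p := by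
      intro p hp
      have h1 : HasDerivAt (fun s => g s p.2) (D p ((1 : ℝ), (0 : Fin n → ℝ))) p.1 :=
        (hDG p hp).comp_hasDerivAt (l := G) p.1 (hcurve p.2 p.1)
      have h2 := hode p.1 (Ioo_subset_Icc_self hp.1) p.2 hp.2
      rw [← h2]
      exact h1.deriv.symm
    have hgtd : ∀ p ∈ V, HasDerivAt (fun s => g s p.2) (G p * B p) p.1 := by
      intro p hp
      have h1 : HasDerivAt (fun s => g s p.2) (D p ((1 : ℝ), (0 : Fin n → ℝ))) p.1 :=
        (hDG p hp).comp_hasDerivAt (l := G) p.1 (hcurve p.2 p.1)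
      rwa [hDt p hp] at h1
    -- the bracket as a continuous linear map
    set LA : Matrix (Fin N) (Fin N) ℝ →L[ℝ] Matrix (Fin N) (Fin N) ℝ :=
      LinearMap.toContinuousLinearMap
        (LinearMap.mulLeft ℝ (A0 i x) - LinearMap.mulRight ℝ (A0 i x)) with hLA
    have hLAapp : ∀ y, LA y = mbracket (A0 i x) y := by
      intro y
      simp [hLA, mbracket, LinearMap.mulLeft_apply, LinearMap.mulRight_apply]
    set w : ℝ → Matrix (Fin N) (Fin N) ℝ :=
      fun t => pd i (g t) x + mbracket (A0 i x) (g t x) with hw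
    -- derivative of w at interior times
    have hwderiv : ∀ t₀ ∈ Ioo (0:ℝ) T, HasDerivAt w (w t₀ * β0 t₀ x) t₀ := by
      intro t₀ ht₀
      have hp₀ : ((t₀, x) : ℝ × (Fin n → ℝ)) ∈ V := Set.mk_mem_prod ht₀ hx
      have hD2 : HasFDerivAt D (fderiv ℝ D (t₀, x)) (t₀, x) := by
        have h := (hGat (t₀, x) hp₀).fderiv_right (m := (⊤ : ℕ∞)) (by simp)
        exact (h.differentiableAt (by simp)).hasFDerivAt
      set D2 := fderiv ℝ D (t₀, x) with hD2def
      have hsymm : ∀ a b, D2 a b = D2 b a := fun a b =>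
        second_derivative_symmetric_of_eventually
          (Filter.eventually_of_mem (hVopen.mem_nhds hp₀) (fun y hy => hDG y hy)) hD2 a b
      have hIoo : Ioo (0:ℝ) T ∈ 𝓝 t₀ := isOpen_Ioo.mem_nhds ht₀
      have hDcurve : HasDerivAt (fun t => D (t, x)) (D2 ((1 : ℝ), (0 : Fin n → ℝ))) t₀ :=
        @HasFDerivAt.comp_hasDerivAt ℝ _ (ℝ × (Fin n → ℝ)) _ _ (ℝ × (Fin n → ℝ) →L[ℝ] Matrix (Fin N) (Fin N) ℝ)
          ContinuousLinearMap.toNormedAddCommGroup ContinuousLinearMap.toNormedSpace _ _ t₀ D D2 hD2 (hcurve x t₀)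
      have hfD : HasDerivAt (fun t => D (t, x) ((0 : ℝ), v))
          (D2 ((1 : ℝ), (0 : Fin n → ℝ)) ((0 : ℝ), v)) t₀ :=
        (ContinuousLinearMap.apply ℝ (Matrix (Fin N) (Fin N) ℝ)
          ((0 : ℝ), v)).hasFDerivAt.comp_hasDerivAt t₀ hDcurve
      have hfeq : (fun t => pd i (g t) x) =ᶠ[𝓝 t₀] fun t => D (t, x) ((0 : ℝ), v) := by
        filter_upwards [hIoo] with t ht
        have h1 : HasFDerivAt G (D (t, x)) (t, x) := hDG (t, x) (Set.mk_mem_prod ht hx)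
        have h2 := h1.comp x (hasFDerivAt_prodMk_right t x)
        have h3 : fderiv ℝ (g t) x
            = (D (t, x)).comp (ContinuousLinearMap.inr ℝ ℝ (Fin n → ℝ)) := h2.fderiv
        show pd i (g t) x = D (t, x) ((0 : ℝ), v)
        unfold pd
        rw [h3]
        rfl
      have hf' : HasDerivAt (fun t => pd i (g t) x)
          (D2 ((1 : ℝ), (0 : Fin n → ℝ)) ((0 : ℝ), v)) t₀ :=
        hfD.congr_of_eventuallyEq hfeq
      -- compute the mixed second derivative
      have hψ : HasFDerivAt (fun p => D p ((1 : ℝ), (0 : Fin n → ℝ)))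
          ((ContinuousLinearMap.apply ℝ (Matrix (Fin N) (Fin N) ℝ)
            ((1 : ℝ), (0 : Fin n → ℝ))).comp D2) (t₀, x) :=
        (ContinuousLinearMap.apply ℝ (Matrix (Fin N) (Fin N) ℝ)
          ((1 : ℝ), (0 : Fin n → ℝ))).hasFDerivAt.comp (t₀, x) hD2
      have hBd : HasFDerivAt B (fderiv ℝ B (t₀, x)) (t₀, x) :=
        ((hBat (t₀, x) hp₀).differentiableAt (by simp)).hasFDerivAt
      have hmul : HasFDerivAt (fun p => G p * B p)
          ((mat_mul_ibbm.deriv (G (t₀, x), B (t₀, x))).comp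
            ((D (t₀, x)).prod (fderiv ℝ B (t₀, x)))) (t₀, x) := by
        have h := (mat_mul_ibbm.hasFDerivAt (G (t₀, x), B (t₀, x))).comp (t₀, x)
          ((hDG (t₀, x) hp₀).prodMk hBd)
        exact h
      have hψ2 : HasFDerivAt (fun p => D p ((1 : ℝ), (0 : Fin n → ℝ)))
          ((mat_mul_ibbm.deriv (G (t₀, x), B (t₀, x))).comp
            ((D (t₀, x)).prod (fderiv ℝ B (t₀, x)))) (t₀, x) := by
        apply hmul.congr_of_eventuallyEq
        filter_upwards [hVopen.mem_nhds hp₀] with q hq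
        exact hDt q hq
      have huniq := hψ.unique hψ2
      have heval : D2 ((0 : ℝ), v) ((1 : ℝ), (0 : Fin n → ℝ))
          = G (t₀, x) * (fderiv ℝ B (t₀, x) ((0 : ℝ), v))
            + (D (t₀, x) ((0 : ℝ), v)) * B (t₀, x) := by
        have h := congrArg (fun (L : (ℝ × (Fin n → ℝ)) →L[ℝ] Matrix (Fin N) (Fin N) ℝ)
          => L ((0 : ℝ), v)) huniq
        exact h.trans (IsBoundedBilinearMap.deriv_apply _ _ _)
      have hBslice : fderiv ℝ B (t₀, x) ((0 : ℝ), v) = pd i (β0 t₀) x := by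
        have h2 := hBd.comp x (hasFDerivAt_prodMk_right t₀ x)
        have h3 : fderiv ℝ (β0 t₀) x
            = (fderiv ℝ B (t₀, x)).comp (ContinuousLinearMap.inr ℝ ℝ (Fin n → ℝ)) := h2.fderiv
        unfold pd
        rw [h3]
        rfl
      have hGslice : D (t₀, x) ((0 : ℝ), v) = pd i (g t₀) x := by
        have h2 := (hDG (t₀, x) hp₀).comp x (hasFDerivAt_prodMk_right t₀ x)
        have h3 : fderiv ℝ (g t₀) x
            = (D (t₀, x)).comp (ContinuousLinearMap.inr ℝ ℝ (Fin n → ℝ)) := h2.fderiv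
        unfold pd
        rw [h3]
        rfl
      have hkerEq : pd i (β0 t₀) x = -mbracket (A0 i x) (β0 t₀ x) :=
        eq_neg_of_add_eq_zero_left (hker t₀ (Ioo_subset_Icc_self ht₀) x hx i)
      have hbr : HasDerivAt (fun t => mbracket (A0 i x) (g t x))
          (mbracket (A0 i x) (g t₀ x * β0 t₀ x)) t₀ := by
        have h := LA.hasFDerivAt.comp_hasDerivAt t₀ (hgtd (t₀, x) hp₀)
        have h2 : HasDerivAt (fun t => LA (g t x)) (LA (g t₀ x * β0 t₀ x)) t₀ := h
        simpa [hLAapp] using h2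
      have hsum := hf'.add hbr
      have hval : D2 ((1 : ℝ), (0 : Fin n → ℝ)) ((0 : ℝ), v)
            + mbracket (A0 i x) (g t₀ x * β0 t₀ x)
          = (pd i (g t₀) x + mbracket (A0 i x) (g t₀ x)) * β0 t₀ x := by
        rw [hsymm ((1 : ℝ), (0 : Fin n → ℝ)) ((0 : ℝ), v), heval, hBslice, hGslice, hkerEq]
        show g t₀ x * -mbracket (A0 i x) (β0 t₀ x) + pd i (g t₀) x * β0 t₀ x
            + mbracket (A0 i x) (g t₀ x * β0 t₀ x)
          = (pd i (g t₀) x + mbracket (A0 i x) (g t₀ x)) * β0 t₀ x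
        unfold mbracket
        noncomm_ring
      rw [hval] at hsum
      exact hsum
    -- initial condition
    have hw0 : w 0 = 0 := by
      have h1 : g 0 =ᶠ[𝓝 x] fun _ => (1 : Matrix (Fin N) (Fin N) ℝ) :=
        Filter.eventuallyEq_of_mem (hU.mem_nhds hx) (fun y hy => hg0 y hy)
      have h2 : fderiv ℝ (g 0) x = fderiv ℝ (fun _ => (1 : Matrix (Fin N) (Fin N) ℝ)) x :=
        h1.fderiv_eq
      show pd i (g 0) x + mbracket (A0 i x) (g 0 x) = 0
      unfold pd mbracket
      rw [h2, fderiv_fun_const, hg0 x hx]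
      simp
    -- continuity of w on [0, T]
    have hUD : UniqueDiffOn ℝ S := (uniqueDiffOn_Icc hT).prod hU.uniqueDiffOn
    have hDWcont : ContinuousOn (fderivWithin ℝ G S) S :=
      hg.continuousOn_fderivWithin hUD (by simp)
    have hcurveC : Continuous (fun t : ℝ => ((t, x) : ℝ × (Fin n → ℝ))) :=
      continuous_id.prodMk continuous_const
    have hmapsto : MapsTo (fun t : ℝ => ((t, x) : ℝ × (Fin n → ℝ))) (Icc 0 T) S :=
      fun t ht => Set.mk_mem_prod ht hx
    have hfeqW : ∀ t ∈ Icc (0:ℝ) T,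
        pd i (g t) x = fderivWithin ℝ G S (t, x) ((0 : ℝ), v) := by
      intro t ht
      have hdw : HasFDerivWithinAt G (fderivWithin ℝ G S (t, x)) S (t, x) :=
        ((hg (t, x) (Set.mk_mem_prod ht hx)).differentiableWithinAt (by simp)).hasFDerivWithinAt
      have h2 : HasFDerivWithinAt (fun y => G (t, y))
          ((fderivWithin ℝ G S (t, x)).comp (ContinuousLinearMap.inr ℝ ℝ (Fin n → ℝ))) U x :=
        hdw.comp x (hasFDerivAt_prodMk_right t x).hasFDerivWithinAt
          (fun y hy => Set.mk_mem_prod ht hy)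
      have h3 := h2.hasFDerivAt (hU.mem_nhds hx)
      have h4 : fderiv ℝ (g t) x
          = (fderivWithin ℝ G S (t, x)).comp (ContinuousLinearMap.inr ℝ ℝ (Fin n → ℝ)) :=
        h3.fderiv
      unfold pd
      rw [h4]
      rfl
    have hgc : ContinuousOn (fun t => g t x) (Icc 0 T) :=
      hg.continuousOn.comp hcurveC.continuousOn hmapsto
    have hwcont : ContinuousOn w (Icc 0 T) := by
      apply ContinuousOn.add
      · apply ContinuousOn.congr
          (f := fun t => fderivWithin ℝ G S (t, x) ((0 : ℝ), v))
        · exact (ContinuousLinearMap.apply ℝ (Matrix (Fin N) (Fin N) ℝ)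
            ((0 : ℝ), v)).continuous.comp_continuousOn
            (hDWcont.comp hcurveC.continuousOn hmapsto)
        · exact hfeqW
      · have := LA.continuous.comp_continuousOn hgc
        apply this.congr
        intro t _
        exact (hLAapp (g t x)).symm
    -- bound on β0
    obtain ⟨C, hC⟩ : ∃ C, ∀ t ∈ Icc (0:ℝ) T, ‖β0 t x‖ ≤ C := by
      have hbc : ContinuousOn (fun t => β0 t x) (Icc 0 T) :=
        hβ0.continuousOn.comp hcurveC.continuousOn hmapsto
      exact isCompact_Icc.exists_bound_of_continuousOn hbc
    set K : ℝ := (N : ℝ) * max C 0 with hK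
    have hK0 : 0 ≤ K := by positivity
    -- conclude w = 0 by Gronwall
    intro t ht
    rcases eq_or_lt_of_le ht.1 with h0 | h0
    · show w t = 0
      rw [← h0]
      exact hw0
    · show w t = 0
      have hbound : ∀ a ∈ Ioc (0:ℝ) t, ‖w t‖ ≤ ‖w a‖ * Real.exp (K * T) := by
        intro a ha
        have hsub : Icc a t ⊆ Icc 0 T := Icc_subset_Icc ha.1.le ht.2
        have hgr := norm_le_gronwallBound_of_norm_deriv_right_le
          (f := w) (f' := fun s => w s * β0 s x) (δ := ‖w a‖) (K := K) (ε := 0)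
          (a := a) (b := t)
          (hwcont.mono hsub)
          (fun s hs => (hwderiv s ⟨lt_of_lt_of_le ha.1 hs.1, lt_of_lt_of_le hs.2 ht.2⟩).hasDerivWithinAt)
          le_rfl
          (fun s hs => by
            have h1 := mat_norm_mul_le (w s) (β0 s x)
            have h2 : ‖β0 s x‖ ≤ max C 0 :=
              le_max_of_le_left (hC s ⟨le_trans ha.1.le hs.1, le_trans hs.2.le ht.2⟩)
            calc ‖w s * β0 s x‖ ≤ (N : ℝ) * ‖w s‖ * ‖β0 s x‖ := h1
              _ ≤ (N : ℝ) * ‖w s‖ * max C 0 := by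
                  apply mul_le_mul_of_nonneg_left h2 (by positivity)
              _ = K * ‖w s‖ + 0 := by rw [hK]; ring)
          t ⟨ha.2, le_rfl⟩
        rw [gronwallBound_ε0] at hgr
        refine hgr.trans ?_
        apply mul_le_mul_of_nonneg_left _ (norm_nonneg _)
        apply Real.exp_le_exp.2
        have h1 : t - a ≤ T := by
          have := ht.2
          have := ha.1
          linarith
        nlinarith
      haveI hne : (𝓝[Ioc (0:ℝ) t] (0:ℝ)).NeBot := by
        apply mem_closure_iff_nhdsWithin_neBot.1
        rw [closure_Ioc h0.ne]
        exact ⟨le_rfl, h0.le⟩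
      have hlim : Filter.Tendsto (fun a => ‖w a‖ * Real.exp (K * T))
          (𝓝[Ioc (0:ℝ) t] (0:ℝ)) (𝓝 0) := by
        have h1 : Filter.Tendsto w (𝓝[Ioc (0:ℝ) t] (0:ℝ)) (𝓝 (w 0)) := by
          have h2 := hwcont.continuousWithinAt (show (0:ℝ) ∈ Icc 0 T from ⟨le_rfl, hT.le⟩)
          exact h2.mono_left (nhdsWithin_mono 0 (fun a ha => ⟨ha.1.le, le_trans ha.2 ht.2⟩))
        have h3 := (h1.norm).mul_const (Real.exp (K * T))
        rw [hw0] at h3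
        simpa using h3
      have hle : ‖w t‖ ≤ 0 :=
        ge_of_tendsto hlim (Filter.eventually_of_mem self_mem_nhdsWithin hbound)
      exact norm_le_zero_iff.1 hle
  refine ⟨fun t ht x hx i => key x hx i t ht, fun t ht x hx hunit i => ?_⟩
  have hweq := key x hx i t ht
  have hpd : pd i (g t) x = g t x * A0 i x - A0 i x * g t x := by
    have h := eq_neg_of_add_eq_zero_left hweq
    rw [h]
    unfold mbracket
    noncomm_ring
  have hinv : g t x * (g t x)⁻¹ = 1 :=
    Matrix.mul_nonsing_inv _ ((Matrix.isUnit_iff_isUnit_det _).1 hunit)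
  rw [hpd]
  calc g t x * A0 i x * (g t x)⁻¹ - (g t x * A0 i x - A0 i x * g t x) * (g t x)⁻¹
      = A0 i x * (g t x * (g t x)⁻¹) := by noncomm_ring
    _ = A0 i x := by rw [hinv, mul_one]
end

section
/- Let N ≥ 3 be an integer, let S_1, …, S_N be nonnegative real numbers, and let q, η, p, Q be real numbers with 0 < q < 1, 0 < η < 1, 1 − η ≥ q, and 1 < p ≤ Q. Assume that for every index j with 2 ≤ j ≤ N − 1: (i) if S_j ≥ p S_{j−1} then S_{j+1} ≥ Q S_j, and (ii) if S_j ≥ q S_{j−1} then S_{j+1} ≥ (1 − η) S_j. Then there exist integers k_1, k_2 with 1 ≤ k_1 ≤ k_2 ≤ N − 1 such that: (a) S_j < q S_{j−1} for every j with 2 ≤ j < k_1 (exponential decay regime); (b) (1 − η) S_j ≤ S_{j+1} < Q S_j for every j with k_1 ≤ j < k_2 (slowly varying regime); and (c) S_{j+1} ≥ Q S_j for every j with k_2 ≤ j ≤ N − 2 (exponential growth regime). -/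
/-- three-regime splitting (Proposition 3.2.1): a nonnegative sequence
satisfying the two growth implications splits into an exponential decay regime, a slowly
varying regime, and an exponential growth regime. -/
theorem three_regime_splitting
    (N : ℕ) (hN : 3 ≤ N) (S : ℕ → ℝ) (hS : ∀ j, 0 ≤ S j)
    (q η p Q : ℝ) (hq0 : 0 < q) (hq1 : q < 1) (hη0 : 0 < η) (hη1 : η < 1)
    (hqη : q ≤ 1 - η) (hp : 1 < p) (hpQ : p ≤ Q)
    (h1 : ∀ j, 2 ≤ j → j ≤ N - 1 → S j ≥ p * S (j - 1) → S (j + 1) ≥ Q * S j)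
    (h2 : ∀ j, 2 ≤ j → j ≤ N - 1 → S j ≥ q * S (j - 1) → S (j + 1) ≥ (1 - η) * S j) :
    ∃ k1 k2 : ℕ, 1 ≤ k1 ∧ k1 ≤ k2 ∧ k2 ≤ N - 1 ∧
      (∀ j, 2 ≤ j → j < k1 → S j < q * S (j - 1)) ∧
      (∀ j, k1 ≤ j → j < k2 → (1 - η) * S j ≤ S (j + 1) ∧ S (j + 1) < Q * S j) ∧
      (∀ j, k2 ≤ j → j ≤ N - 2 → S (j + 1) ≥ Q * S j) := by
  classical
  -- k2 : first index where growth kicks in (capped at N-1)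
  have hPex : ∃ j : ℕ, (1 ≤ j ∧ S (j + 1) ≥ Q * S j) ∨ j = N - 1 := ⟨N - 1, Or.inr rfl⟩
  set k2 := Nat.find hPex with hk2def
  have hk2le : k2 ≤ N - 1 := Nat.find_le (Or.inr rfl)
  have hk21 : 1 ≤ k2 := by
    by_contra h
    have h0 : k2 = 0 := by omega
    have := Nat.find_spec hPex
    rw [← hk2def, h0] at this
    rcases this with ⟨h1', _⟩ | h'
    · omega
    · omega
  have hlt : ∀ j, 1 ≤ j → j < k2 → S (j + 1) < Q * S j := by
    intro j h1j hj
    have hnot := Nat.find_min hPex hj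
    by_contra hc
    push_neg at hc
    exact hnot (Or.inl ⟨h1j, hc⟩)
  -- growth regime
  have hgrow : ∀ j, k2 ≤ j → j ≤ N - 2 → S (j + 1) ≥ Q * S j := by
    intro j hj
    induction j, hj using Nat.le_induction with
    | base =>
      intro hle
      rcases Nat.find_spec hPex with ⟨_, h⟩ | h
      · exact h
      · omega
    | succ j hj ih =>
      intro hle
      have hg := ih (by omega)
      have hSp : S (j + 1) ≥ p * S j := le_trans (by nlinarith [hS j]) hg
      have := h1 (j + 1) (by omega) (by omega) (by simpa using hSp)
      simpa using this
  -- k1 : first index where decay fails (capped at k2)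
  have hRex : ∃ j : ℕ, (2 ≤ j ∧ S j ≥ q * S (j - 1)) ∨ j = k2 := ⟨k2, Or.inr rfl⟩
  set k1 := Nat.find hRex with hk1def
  have hk1le : k1 ≤ k2 := Nat.find_le (Or.inr rfl)
  have hk11 : 1 ≤ k1 := by
    by_contra h
    have h0 : k1 = 0 := by omega
    have := Nat.find_spec hRex
    rw [← hk1def, h0] at this
    rcases this with ⟨h1', _⟩ | h'
    · omega
    · omega
  have hdecay : ∀ j, 2 ≤ j → j < k1 → S j < q * S (j - 1) := by
    intro j h2j hj
    have hnot := Nat.find_min hRex hj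
    by_contra hc
    push_neg at hc
    exact hnot (Or.inl ⟨h2j, hc⟩)
  have hmid : ∀ j, k1 ≤ j → j < k2 → (1 - η) * S j ≤ S (j + 1) ∧ S (j + 1) < Q * S j := by
    intro j hj
    induction j, hj using Nat.le_induction with
    | base =>
      intro hlt2
      rcases Nat.find_spec hRex with ⟨hk12, hq'⟩ | h
      · exact ⟨h2 k1 hk12 (by omega) hq', hlt k1 (by omega) hlt2⟩
      · omega
    | succ j hj ih =>
      intro hlt2
      have hm := ih (by omega)
      have hk12 : 2 ≤ k1 := by
        rcases Nat.find_spec hRex with ⟨h, _⟩ | h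
        · exact h
        · omega
      have hq' : S (j + 1) ≥ q * S j := le_trans (by nlinarith [hS j]) hm.1
      have h2' := h2 (j + 1) (by omega) (by omega) (by simpa using hq')
      exact ⟨by simpa using h2', hlt (j + 1) (by omega) hlt2⟩
  exact ⟨k1, k2, hk11, hk1le, hk2le, hdecay, hmid, hgrow⟩
end

section
/- Let f : [1, ∞) → [0, ∞) be locally integrable with ∫_1^∞ f(s) ds < ∞, and suppose there exist constants C ≥ 1 and β ∈ (1/2, 1) such that for every T ≥ 2, ∫_T^∞ f(s) ds ≤ C ( ∫_{T−1}^{T+1} f(s) ds )^β. Then √f is integrable on [2, ∞) and there exist constants α > 0 and C′ > 0 such that ∫_t^∞ √(f(s)) ds ≤ C′ t^{−α} for every t ≥ 2. -/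
/-!
Write `G T = ∫_T^∞ f`. Since `G (T - 1) - G (T + 1) = ∫_{T-1}^{T+1} f`, the hypothesis says
`G T ^ (1 + h) ≤ D (G (T - 1) - G (T + 1))` with `h = 1/β - 1`. Along `a n = G (2n + 2)` this
forces `a n ^ (-h)` to grow at least linearly, so `G t = O(t ^ (-1/h))`, and `1/h > 1` because
`β > 1/2`. By Cauchy–Schwarz, `∫_u^{2u} √f ≤ √(u G u) = O(u ^ (-(1/h - 1)/2))`, and the dyadic
blocks `(2^k t, 2^(k+1) t]` then contribute a convergent geometric series.
-/

open MeasureTheory Set Function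

lemma rpow_neg_add_mul_sub_div_le {h a b : ℝ} (hh : 0 ≤ h) (hb : 0 < b) (hba : b ≤ a) :
    a ^ (-h) + h * (a - b) / a ^ (h + 1) ≤ b ^ (-h) := by
  have ha : 0 < a := hb.trans_le hba
  -- Bernoulli's inequality for the exponent `h + 1 ≥ 1`, applied to `a / b`
  have bern := one_add_mul_self_le_rpow_one_add (s := a / b - 1)
    (by linarith [div_pos ha hb]) (p := h + 1) (by linarith)
  rw [add_sub_cancel, Real.div_rpow ha.le hb.le, Real.rpow_add_one ha.ne',
    Real.rpow_add_one hb.ne'] at bern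
  have hA : 0 < a ^ h := Real.rpow_pos_of_pos ha h
  have hB : 0 < b ^ h := Real.rpow_pos_of_pos hb h
  rw [Real.rpow_neg ha.le, Real.rpow_neg hb.le, Real.rpow_add_one ha.ne']
  rw [le_div_iff₀ (by positivity), one_add_mul, ← sub_nonneg] at bern
  rw [← sub_nonneg]
  field_simp at bern ⊢
  nlinarith [bern]

lemma rpow_neg_add_min_le_rpow_neg {h D M x y : ℝ} (hh : 0 < h) (hD : 0 < D)
    (hy : 0 < y) (hyx : y ≤ x) (hxM : x ≤ M) (hrec : y ^ (h + 1) ≤ D * (x - y)) :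
    x ^ (-h) + min ((2 ^ h - 1) * M ^ (-h)) (h / (2 ^ (h + 1) * D)) ≤ y ^ (-h) := by
  have hx : 0 < x := hy.trans_le hyx
  rcases le_or_gt y (x / 2) with hsmall | hlarge
  · have hM : M ^ (-h) ≤ x ^ (-h) := Real.rpow_le_rpow_of_nonpos hx hxM (by linarith)
    have h2 : 1 ≤ (2 : ℝ) ^ h := Real.one_le_rpow one_le_two hh.le
    calc x ^ (-h) + min ((2 ^ h - 1) * M ^ (-h)) (h / (2 ^ (h + 1) * D))
        ≤ x ^ (-h) + (2 ^ h - 1) * x ^ (-h) := by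
          gcongr
          exact (min_le_left _ _).trans (by gcongr)
      _ = (x / 2) ^ (-h) := by
          rw [Real.div_rpow hx.le zero_le_two, Real.rpow_neg zero_le_two, div_inv_eq_mul]; ring
      _ ≤ y ^ (-h) := Real.rpow_le_rpow_of_nonpos hy hsmall (by linarith)
  · have hratio : (1 / 2 : ℝ) ^ (h + 1) ≤ (y / x) ^ (h + 1) :=
      Real.rpow_le_rpow (by norm_num) (by rw [le_div_iff₀ hx]; linarith) (by linarith)
    calc x ^ (-h) + min ((2 ^ h - 1) * M ^ (-h)) (h / (2 ^ (h + 1) * D))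
        ≤ x ^ (-h) + h * (1 / 2) ^ (h + 1) / D := by
          rw [one_div, Real.inv_rpow zero_le_two, ← div_eq_mul_inv, div_div]
          gcongr
          exact min_le_right _ _
      _ ≤ x ^ (-h) + h * (y / x) ^ (h + 1) / D := by gcongr
      _ = x ^ (-h) + h * (y ^ (h + 1) / D) / x ^ (h + 1) := by
          rw [Real.div_rpow hy.le hx.le]; ring
      _ ≤ x ^ (-h) + h * (x - y) / x ^ (h + 1) := by
          gcongr
          rwa [div_le_iff₀' hD]
      _ ≤ y ^ (-h) := rpow_neg_add_mul_sub_div_le hh.le hy hyx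

lemma exists_le_mul_rpow_of_rpow_succ_le_mul_sub {h D : ℝ} (hh : 0 < h) (hD : 0 < D) {a : ℕ → ℝ}
    (ha : ∀ n, 0 ≤ a n) (hrec : ∀ n, a (n + 1) ^ (h + 1) ≤ D * (a n - a (n + 1))) :
    ∃ K, 0 < K ∧ ∀ n : ℕ, a n ≤ K * ((n : ℝ) + 1) ^ (-h⁻¹) := by
  have hanti : Antitone a := antitone_nat_of_succ_le fun n => sub_nonneg.1 <|
    (mul_nonneg_iff_of_pos_left hD).1 ((Real.rpow_nonneg (ha (n + 1)) _).trans (hrec n))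
  set M := a 0 + 1
  have hM : 0 < M := by linarith [ha 0]
  set c := min ((2 ^ h - 1) * M ^ (-h)) (h / (2 ^ (h + 1) * D))
  have hc : 0 < c := lt_min (mul_pos (by linarith [Real.one_lt_rpow one_lt_two hh]) (by positivity))
    (by positivity)
  have hgrowth : ∀ n : ℕ, 0 < a n → M ^ (-h) + c * n ≤ a n ^ (-h) := by
    intro n
    induction n with
    | zero =>
      intro h0
      simpa using Real.rpow_le_rpow_of_nonpos h0 (by linarith : a 0 ≤ M) (by linarith)
    | succ n ih =>
      intro hpos
      have hstep := rpow_neg_add_min_le_rpow_neg (M := M) hh hD hpos (hanti n.le_succ)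
        ((hanti (Nat.zero_le n)).trans (by linarith)) (hrec n)
      push_cast
      linarith [ih (hpos.trans_le (hanti n.le_succ))]
  set c' := min (M ^ (-h)) c
  have hc' : 0 < c' := lt_min (by positivity) hc
  refine ⟨c' ^ (-h⁻¹), by positivity, fun n => ?_⟩
  rcases (ha n).eq_or_lt with hzero | hpos
  · rw [← hzero]; positivity
  have hlow : c' * (n + 1) ≤ a n ^ (-h) := by
    have := hgrowth n hpos
    nlinarith [min_le_left (M ^ (-h)) c, min_le_right (M ^ (-h)) c, (Nat.cast_nonneg n : (0:ℝ) ≤ n)]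
  calc a n = (a n ^ (-h)) ^ (-h⁻¹) := by
        rw [← Real.rpow_mul hpos.le, neg_mul_neg, mul_inv_cancel₀ hh.ne', Real.rpow_one]
    _ ≤ (c' * (n + 1)) ^ (-h⁻¹) :=
        Real.rpow_le_rpow_of_nonpos (by positivity) hlow (neg_nonpos.2 (inv_nonneg.2 hh.le))
    _ = c' ^ (-h⁻¹) * ((n : ℝ) + 1) ^ (-h⁻¹) := Real.mul_rpow hc'.le (by positivity)

lemma exists_le_mul_rpow_of_rpow_le_mul_sub_of_antitoneOn {h D : ℝ} (hh : 0 < h) (hD : 0 < D)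
    {G : ℝ → ℝ} (hanti : AntitoneOn G (Ici 1)) (hG0 : ∀ t, 1 ≤ t → 0 ≤ G t)
    (hrec : ∀ T, 2 ≤ T → G T ^ (h + 1) ≤ D * (G (T - 1) - G (T + 1))) :
    ∃ K, 0 < K ∧ ∀ t, 2 ≤ t → G t ≤ K * t ^ (-h⁻¹) := by
  -- sample `G` at the even points `2n + 2`, so that neighbouring samples straddle `2n + 3`
  have hmem : ∀ n : ℕ, (2 * n + 2 : ℝ) ∈ Ici 1 := fun n => by
    simp only [mem_Ici]; linarith [(Nat.cast_nonneg n : (0:ℝ) ≤ n)]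
  obtain ⟨K, hK, hdecay⟩ := exists_le_mul_rpow_of_rpow_succ_le_mul_sub hh hD
    (a := fun n => G (2 * n + 2)) (fun n => hG0 _ (hmem n)) fun n => by
      have hodd : (1 : ℝ) ≤ 2 * n + 3 := by linarith [hmem n]
      calc G (2 * ((n + 1 : ℕ) : ℝ) + 2) ^ (h + 1) ≤ G (2 * n + 3) ^ (h + 1) := by
            refine Real.rpow_le_rpow (hG0 _ (hmem _)) (hanti hodd (hmem _) ?_) (by linarith)
            push_cast; linarith
        _ ≤ D * (G (2 * n + 3 - 1) - G (2 * n + 3 + 1)) := hrec _ (by linarith)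
        _ = D * (G (2 * n + 2) - G (2 * ((n + 1 : ℕ) : ℝ) + 2)) := by push_cast; ring_nf
  refine ⟨K * 4 ^ h⁻¹, by positivity, fun t ht => ?_⟩
  obtain ⟨n, hn⟩ := Nat.exists_eq_add_of_le' (Nat.le_floor (by linarith) : 1 ≤ ⌊t / 2⌋₊)
  have hfloor := Nat.floor_le (by linarith : 0 ≤ t / 2)
  have hlt_floor := Nat.lt_floor_add_one (t / 2)
  rw [hn] at hfloor hlt_floor
  push_cast at hfloor hlt_floor
  have ht4 : t / 4 ≤ n + 1 := by linarith [(Nat.cast_nonneg n : (0:ℝ) ≤ n)]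
  calc G t ≤ G (2 * n + 2) := hanti (hmem n) (by simp only [mem_Ici]; linarith) (by linarith)
    _ ≤ K * ((n : ℝ) + 1) ^ (-h⁻¹) := hdecay n
    _ ≤ K * (t / 4) ^ (-h⁻¹) := mul_le_mul_of_nonneg_left
        (Real.rpow_le_rpow_of_nonpos (by positivity) ht4 (neg_nonpos.2 (inv_nonneg.2 hh.le))) hK.le
    _ = K * 4 ^ h⁻¹ * t ^ (-h⁻¹) := by
        rw [Real.div_rpow (by linarith) (by norm_num), Real.rpow_neg (by norm_num : (0:ℝ) ≤ 4)]
        field_simp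

lemma setIntegral_Ici_sub_setIntegral_Ici {f : ℝ → ℝ} {a b : ℝ} (hab : a ≤ b)
    (hf : IntegrableOn f (Ici a)) :
    (∫ x in Ici a, f x) - ∫ x in Ici b, f x = ∫ x in Icc a b, f x := by
  rw [integral_Icc_eq_integral_Ico, ← Ico_union_Ici_eq_Ici hab,
    setIntegral_union ((Iio_disjoint_Ici le_rfl).mono_left Ico_subset_Iio_self) measurableSet_Ici
      (hf.mono_set Ico_subset_Ici_self) (hf.mono_set (Ici_subset_Ici.2 hab)), add_sub_cancel_right]

lemma exists_setIntegral_Ici_le_mul_rpow {f : ℝ → ℝ} (hf0 : ∀ s, 1 ≤ s → 0 ≤ f s)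
    (hf : IntegrableOn f (Ici 1)) {C β : ℝ} (hC : 0 < C) (hβ0 : 0 < β) (hβ1 : β < 1)
    (hrec : ∀ T, 2 ≤ T → ∫ s in Ici T, f s ≤ C * (∫ s in Icc (T - 1) (T + 1), f s) ^ β) :
    ∃ K, 0 < K ∧ ∀ t, 2 ≤ t → ∫ s in Ici t, f s ≤ K * t ^ (-(β⁻¹ - 1)⁻¹) := by
  have hdiff : ∀ a b, 1 ≤ a → a ≤ b →
      (∫ s in Ici a, f s) - ∫ s in Ici b, f s = ∫ s in Icc a b, f s := fun a b ha hab =>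
    setIntegral_Ici_sub_setIntegral_Ici hab (hf.mono_set (Ici_subset_Ici.2 ha))
  have hIcc : ∀ a b, 1 ≤ a → 0 ≤ ∫ s in Icc a b, f s := fun a b ha =>
    setIntegral_nonneg measurableSet_Icc fun s hs => hf0 s (ha.trans hs.1)
  have hIci : ∀ t, 1 ≤ t → 0 ≤ ∫ s in Ici t, f s := fun t ht =>
    setIntegral_nonneg measurableSet_Ici fun s hs => hf0 s (ht.trans hs)
  have hh : 0 < β⁻¹ - 1 := sub_pos.2 (one_lt_inv_iff₀.2 ⟨hβ0, hβ1⟩)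
  refine exists_le_mul_rpow_of_rpow_le_mul_sub_of_antitoneOn hh (Real.rpow_pos_of_pos hC β⁻¹)
    (fun a ha b _ hab => ?_) hIci fun T hT => ?_
  · linarith [hdiff a b ha hab, hIcc a b ha]
  · have hT1 : (1 : ℝ) ≤ T - 1 := by linarith
    rw [sub_add_cancel, hdiff _ _ hT1 (by linarith), ← Real.rpow_rpow_inv (hIcc _ _ hT1) hβ0.ne',
      ← Real.mul_rpow hC.le (Real.rpow_nonneg (hIcc _ _ hT1) β)]
    exact Real.rpow_le_rpow (hIci T (by linarith)) (hrec T hT) (by positivity)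

section SqrtIntegral

variable {α : Type*} [MeasurableSpace α] {μ : Measure α} {s : Set α} {f : α → ℝ}

lemma MeasureTheory.IntegrableOn.sqrt (hf : IntegrableOn f s μ) (hs : μ s ≠ ⊤) :
    IntegrableOn (fun x => √(f x)) s μ := by
  refine (hf.norm.add (integrableOn_const hs (C := (1 : ℝ)))).mono'
    (Real.continuous_sqrt.comp_aestronglyMeasurable hf.aestronglyMeasurable)
    (ae_of_all _ fun x => ?_)
  rw [Pi.add_apply, Real.norm_of_nonneg (Real.sqrt_nonneg _), Real.norm_eq_abs, Real.sqrt_le_iff]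
  exact ⟨by positivity, by nlinarith [le_abs_self (f x), abs_nonneg (f x)]⟩

lemma setIntegral_sqrt_le_sqrt_mul (hs : MeasurableSet s) (hμs : μ s ≠ ⊤)
    (hf : IntegrableOn f s μ) (hf0 : ∀ x ∈ s, 0 ≤ f x) {L I : ℝ} (hL : 0 < L) (hI : 0 < I)
    (hμL : μ.real s ≤ L) (hfI : ∫ x in s, f x ∂μ ≤ I) :
    ∫ x in s, √(f x) ∂μ ≤ √(L * I) := by
  -- AM-GM `√y ≤ (ε + y / ε) / 2`, with `ε` chosen to balance the two terms
  set ε := √I / √L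
  have hε : 0 < ε := by positivity
  have hamgm : ∀ y, 0 ≤ y → √y ≤ (ε + y / ε) / 2 := fun y hy => by
    rw [le_div_iff₀ two_pos, add_div' _ _ _ hε.ne', le_div_iff₀ hε]
    nlinarith [two_mul_le_add_sq (√y) ε, Real.sq_sqrt hy]
  calc ∫ x in s, √(f x) ∂μ ≤ ∫ x in s, (ε + f x / ε) / 2 ∂μ :=
        setIntegral_mono_on (hf.sqrt hμs)
          (((integrableOn_const hμs).add (hf.div_const ε)).div_const 2) hs
          fun x hx => hamgm _ (hf0 x hx)
    _ = (ε * μ.real s + (∫ x in s, f x ∂μ) / ε) / 2 := by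
        rw [integral_div, integral_add (integrableOn_const hμs (C := ε)) (hf.div_const ε),
          setIntegral_const, integral_div, smul_eq_mul, mul_comm]
    _ ≤ (ε * L + I / ε) / 2 := by gcongr
    _ = √(L * I) := by
        have hL' := Real.sq_sqrt hL.le
        have hI' := Real.sq_sqrt hI.le
        rw [Real.sqrt_mul hL.le]
        simp only [ε]
        field_simp
        rw [hL', hI']
        ring

end SqrtIntegral

lemma integrableOn_Ioi_and_setIntegral_le_of_dyadic {g : ℝ → ℝ} {t r M : ℝ} (ht : 0 < t)
    (hr : 0 < r) (hg0 : ∀ x, t < x → 0 ≤ g x) (hg : ∀ u, t ≤ u → IntegrableOn g (Ioc u (2 * u)))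
    (hblock : ∀ u, t ≤ u → ∫ x in Ioc u (2 * u), g x ≤ M * u ^ (-r)) :
    IntegrableOn g (Ioi t) ∧ ∫ x in Ioi t, g x ≤ M * t ^ (-r) / (1 - 2 ^ (-r)) := by
  have hq0 : (0 : ℝ) ≤ 2 ^ (-r) := by positivity
  have hq1 : (2 : ℝ) ^ (-r) < 1 := Real.rpow_lt_one_of_one_lt_of_neg one_lt_two (neg_lt_zero.2 hr)
  have hmono : Monotone fun k : ℕ => t * 2 ^ k := fun i j hij =>
    mul_le_mul_of_nonneg_left (pow_le_pow_right₀ one_le_two hij) ht.le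
  have hstart : ∀ k : ℕ, t ≤ t * 2 ^ k := fun k => by simpa using hmono k.zero_le
  have hunion : ⋃ k : ℕ, Ioc (t * 2 ^ k) (2 * (t * 2 ^ k)) = Ioi t := by
    have hunbdd : ¬BddAbove (range fun k : ℕ => t * 2 ^ k) := Filter.not_bddAbove_of_tendsto_atTop
      ((tendsto_pow_atTop_atTop_of_one_lt one_lt_two).const_mul_atTop ht)
    simpa [pow_succ, mul_comm, mul_left_comm] using
      iUnion_Ioc_map_succ_eq_Ioi (fun k => hmono bot_le) hunbdd
  have hdisj : Pairwise (Disjoint on fun k : ℕ => Ioc (t * 2 ^ k) (2 * (t * 2 ^ k))) := by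
    simpa [pow_succ, mul_comm, mul_left_comm] using hmono.pairwise_disjoint_on_Ioc_succ
  have hbound : ∀ k : ℕ,
      ∫ x in Ioc (t * 2 ^ k) (2 * (t * 2 ^ k)), g x ≤ M * t ^ (-r) * (2 ^ (-r)) ^ k := fun k => by
    rw [mul_assoc, Real.rpow_pow_comm zero_le_two, ← Real.mul_rpow ht.le (by positivity)]
    exact hblock _ (hstart k)
  have hsummable : Summable fun k : ℕ => ∫ x in Ioc (t * 2 ^ k) (2 * (t * 2 ^ k)), ‖g x‖ := by
    refine ((summable_geometric_of_lt_one hq0 hq1).mul_left (M * t ^ (-r))).of_nonneg_of_le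
      (fun k => integral_nonneg fun x => norm_nonneg _) fun k => ?_
    rw [setIntegral_congr_fun measurableSet_Ioc fun x hx =>
      Real.norm_of_nonneg (hg0 x ((hstart k).trans_lt hx.1))]
    exact hbound k
  have hint : IntegrableOn g (Ioi t) :=
    hunion ▸ integrableOn_iUnion_of_summable_integral_norm (fun k => hg _ (hstart k)) hsummable
  refine ⟨hint, ?_⟩
  have hsum := hasSum_integral_iUnion (fun _ => measurableSet_Ioc) hdisj (hunion ▸ hint)
  rw [hunion] at hsum
  rw [div_eq_mul_inv]
  exact hasSum_le hbound hsum ((hasSum_geometric_of_lt_one hq0 hq1).mul_left _)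

lemma setIntegral_Ioc_sqrt_le_of_setIntegral_Ici_le {f : ℝ → ℝ} {u K γ : ℝ} (hu : 0 < u)
    (hK : 0 < K) (hf : IntegrableOn f (Ici u)) (hf0 : ∀ x, u ≤ x → 0 ≤ f x)
    (htail : ∫ x in Ici u, f x ≤ K * u ^ (-γ)) :
    ∫ x in Ioc u (2 * u), √(f x) ≤ √K * u ^ (-((γ - 1) / 2)) := by
  have hsub : Ioc u (2 * u) ⊆ Ici u := Ioc_subset_Icc_self.trans Icc_subset_Ici_self
  have hIoc : ∫ x in Ioc u (2 * u), f x ≤ ∫ x in Ici u, f x :=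
    setIntegral_mono_set hf (ae_restrict_of_forall_mem measurableSet_Ici hf0) hsub.eventuallyLE
  calc ∫ x in Ioc u (2 * u), √(f x) ≤ √(u * (K * u ^ (-γ))) :=
        setIntegral_sqrt_le_sqrt_mul measurableSet_Ioc measure_Ioc_lt_top.ne (hf.mono_set hsub)
          (fun x hx => hf0 x (hsub hx)) hu (by positivity)
          (by rw [Real.volume_real_Ioc_of_le (by linarith)]; linarith) (hIoc.trans htail)
    _ = √K * u ^ (-((γ - 1) / 2)) := by
        rw [mul_left_comm, Real.sqrt_mul hK.le, mul_comm u, ← Real.rpow_add_one hu.ne',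
          Real.sqrt_eq_rpow (u ^ _), ← Real.rpow_mul hu.le]
        ring_nf

theorem tail_inequality_gives_polynomial_decay_general
    (f : ℝ → ℝ) (hf0 : ∀ s, 1 ≤ s → 0 ≤ f s)
    (hint : IntegrableOn f (Ici 1))
    (C β : ℝ) (hC : 1 ≤ C) (hβ1 : 1 / 2 < β) (hβ2 : β < 1)
    (hrec : ∀ T : ℝ, 2 ≤ T →
      (∫ s in Ici T, f s) ≤ C * (∫ s in Icc (T - 1) (T + 1), f s) ^ β) :
    IntegrableOn (fun s => Real.sqrt (f s)) (Ici 2) ∧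
      ∃ α : ℝ, 0 < α ∧ ∃ C' : ℝ, 0 < C' ∧ ∀ t : ℝ, 2 ≤ t →
        (∫ s in Ici t, Real.sqrt (f s)) ≤ C' * t ^ (-α) := by
  have hβ0 : 0 < β := by linarith
  obtain ⟨K, hK, htail⟩ := exists_setIntegral_Ici_le_mul_rpow hf0 hint (by linarith) hβ0 hβ2 hrec
  have hγ : 1 < (β⁻¹ - 1)⁻¹ := by
    rw [one_lt_inv₀ (sub_pos.2 (one_lt_inv_iff₀.2 ⟨hβ0, hβ2⟩)), sub_lt_iff_lt_add,
      one_add_one_eq_two, inv_lt_comm₀ hβ0 two_pos]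
    linarith
  set r := ((β⁻¹ - 1)⁻¹ - 1) / 2
  have hr : 0 < r := by simp only [r]; linarith
  have hdyadic : ∀ t, 2 ≤ t → IntegrableOn (fun s => √(f s)) (Ioi t) ∧
      ∫ s in Ioi t, √(f s) ≤ √K * t ^ (-r) / (1 - 2 ^ (-r)) := fun t ht =>
    integrableOn_Ioi_and_setIntegral_le_of_dyadic (by linarith) hr (fun _ _ => Real.sqrt_nonneg _)
      (fun u hu => (hint.mono_set (Ioc_subset_Ioi_self.trans (Ioi_subset_Ici (by linarith)))).sqrt
        measure_Ioc_lt_top.ne)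
      fun u hu => setIntegral_Ioc_sqrt_le_of_setIntegral_Ici_le (by linarith) hK
        (hint.mono_set (Ici_subset_Ici.2 (by linarith))) (fun x hx => hf0 x (by linarith))
        (htail u (by linarith))
  have hq : 0 < 1 - (2 : ℝ) ^ (-r) :=
    sub_pos.2 (Real.rpow_lt_one_of_one_lt_of_neg one_lt_two (neg_lt_zero.2 hr))
  refine ⟨by rw [integrableOn_Ici_iff_integrableOn_Ioi]; exact (hdyadic 2 le_rfl).1, r, hr,
    √K / (1 - 2 ^ (-r)), by positivity, fun t ht => ?_⟩
  rw [integral_Ici_eq_integral_Ioi, div_mul_eq_mul_div]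
  exact (hdyadic t ht).2

/-- an integral difference inequality with exponent `β ∈ (1/2, 1)` for the
tails of a nonnegative integrable function forces polynomial decay of `∫_t^∞ √f`. -/
theorem tail_inequality_gives_polynomial_decay
    (f : ℝ → ℝ) (hf0 : ∀ s, 1 ≤ s → 0 ≤ f s)
    (hloc : LocallyIntegrableOn f (Ici 1))
    (hint : IntegrableOn f (Ici 1))
    (C β : ℝ) (hC : 1 ≤ C) (hβ1 : 1 / 2 < β) (hβ2 : β < 1)
    (hrec : ∀ T : ℝ, 2 ≤ T →
      (∫ s in Ici T, f s) ≤ C * (∫ s in Icc (T - 1) (T + 1), f s) ^ β) :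
    IntegrableOn (fun s => Real.sqrt (f s)) (Ici 2) ∧
      ∃ α : ℝ, 0 < α ∧ ∃ C' : ℝ, 0 < C' ∧ ∀ t : ℝ, 2 ≤ t →
        (∫ s in Ici t, Real.sqrt (f s)) ≤ C' * t ^ (-α) :=
  tail_inequality_gives_polynomial_decay_general f hf0 hint C β hC hβ1 hβ2 hrec
end

section
/- Let (x_k)_{k ≥ 1} be a nonincreasing sequence of nonnegative real numbers and suppose there exist A > 0 and γ > 1 with x_k ≤ A k^{−γ} for all k ≥ 1. Then there exists a constant C > 0 depending only on A and γ such that for every m ≥ 1, Σ_{k ≥ m} (x_k − x_{k+1})^{1/2} ≤ C m^{(1−γ)/2}. -/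
/-!
Cauchy–Schwarz on a block of `n` consecutive indices starting at `n` bounds the sum of the square
roots there by `√(n · x n) ≤ √A · n^((1-γ)/2)`, since the differences telescope. Covering `[m, ∞)`
by the dyadic blocks `[2ⁱm, 2ⁱ⁺¹m)` turns these block bounds into a geometric series of ratio
`2^((1-γ)/2) < 1`.
-/

open Finset Real

theorem Antitone.sum_range_sqrt_sub_succ_le {x : ℕ → ℝ} (hx : Antitone x) (n j : ℕ) :
    ∑ k ∈ range j, √(x (n + k) - x (n + k + 1)) ≤ √(j * (x n - x (n + j))) := by
  have hcs := Real.sum_sqrt_mul_sqrt_le (range j) (f := fun _ => 1)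
    (g := fun k => x (n + k) - x (n + k + 1)) (fun _ => zero_le_one)
    (fun k => sub_nonneg.2 (hx (n + k).le_succ))
  have htelescope : ∑ k ∈ range j, (x (n + k) - x (n + k + 1)) = x n - x (n + j) :=
    sum_range_sub' (fun k => x (n + k)) j
  simp only [sqrt_one, one_mul, sum_const, card_range, nsmul_eq_mul, mul_one, htelescope] at hcs
  rwa [sqrt_mul (Nat.cast_nonneg j)]

theorem Antitone.sum_range_sqrt_sub_succ_le_sqrt_mul_rpow {x : ℕ → ℝ} (hx : Antitone x)
    (hpos : ∀ k, 0 ≤ x k) {A γ : ℝ} (hA : 0 ≤ A) {n : ℕ} (hn : 1 ≤ n)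
    (hxn : x n ≤ A * (n : ℝ) ^ (-γ)) :
    ∑ k ∈ range n, √(x (n + k) - x (n + k + 1)) ≤ √A * (n : ℝ) ^ ((1 - γ) / 2) := by
  have hn' : (0 : ℝ) < n := by exact_mod_cast hn
  calc ∑ k ∈ range n, √(x (n + k) - x (n + k + 1)) ≤ √(n * (x n - x (n + n))) :=
        hx.sum_range_sqrt_sub_succ_le n n
    _ ≤ √(n * (A * (n : ℝ) ^ (-γ))) := by gcongr; linarith [hpos (n + n)]
    _ = √(A * (n : ℝ) ^ (-γ + 1)) := by rw [rpow_add_one hn'.ne']; ring_nf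
    _ = √A * (n : ℝ) ^ ((1 - γ) / 2) := by
      rw [sqrt_mul hA, sqrt_eq_rpow (_ ^ _), ← rpow_mul hn'.le]
      congr 2
      ring

theorem sum_range_le_of_dyadic_block_le {a : ℕ → ℝ} (ha : ∀ k, 0 ≤ a k) {B p : ℝ} (hp : p < 0)
    (hblock : ∀ n, 1 ≤ n → ∑ k ∈ range n, a (n + k) ≤ B * n ^ p) (N : ℕ) {n : ℕ} (hn : 1 ≤ n) :
    ∑ k ∈ range N, a (n + k) ≤ B / (1 - 2 ^ p) * n ^ p := by
  have hr : (2 : ℝ) ^ p < 1 := rpow_lt_one_of_one_lt_of_neg one_lt_two hp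
  have hB : 0 ≤ B := by
    have h := hblock 1 le_rfl
    simp only [sum_range_one, Nat.cast_one, one_rpow, mul_one] at h
    exact (ha _).trans h
  have hBC : B ≤ B / (1 - 2 ^ p) :=
    le_div_self hB (by linarith) (by linarith [rpow_pos_of_pos two_pos p])
  have hgeom : B + B / (1 - 2 ^ p) * 2 ^ p = B / (1 - 2 ^ p) := by
    field_simp [(by linarith : (1 : ℝ) - 2 ^ p ≠ 0)]
    ring
  induction N using Nat.strong_induction_on generalizing n with
  | _ N ih =>
    by_cases hNn : N ≤ n
    · calc ∑ k ∈ range N, a (n + k) ≤ ∑ k ∈ range n, a (n + k) :=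
            sum_le_sum_of_subset_of_nonneg (range_mono hNn) fun k _ _ => ha (n + k)
        _ ≤ B * n ^ p := hblock n hn
        _ ≤ B / (1 - 2 ^ p) * n ^ p := by gcongr
    · obtain ⟨M, rfl⟩ : ∃ M, N = n + M := ⟨N - n, by omega⟩
      have h2n : ((n + n : ℕ) : ℝ) ^ p = 2 ^ p * n ^ p := by
        rw [← two_mul, Nat.cast_mul, Nat.cast_two, mul_rpow zero_le_two (Nat.cast_nonneg n)]
      have htail : ∑ k ∈ range M, a (n + (n + k)) ≤ B / (1 - 2 ^ p) * (2 ^ p * n ^ p) := by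
        simpa only [add_assoc, h2n] using ih M (by omega) (n := n + n) (by omega)
      calc ∑ k ∈ range (n + M), a (n + k)
          = ∑ k ∈ range n, a (n + k) + ∑ k ∈ range M, a (n + (n + k)) := sum_range_add _ n M
        _ ≤ B * n ^ p + B / (1 - 2 ^ p) * (2 ^ p * n ^ p) := add_le_add (hblock n hn) htail
        _ = B / (1 - 2 ^ p) * n ^ p := by linear_combination (n : ℝ) ^ p * hgeom

/-- summation lemma: if a nonincreasing nonnegative sequence satisfies
`x_k ≤ A k^{-γ}` with `γ > 1`, then `Σ_{k ≥ m} (x_k - x_{k+1})^{1/2} ≤ C m^{(1-γ)/2}`. -/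
theorem summation_of_square_roots_of_differences
    (x : ℕ → ℝ) (hmono : Antitone x) (hpos : ∀ k, 0 ≤ x k)
    (A γ : ℝ) (hA : 0 < A) (hγ : 1 < γ)
    (hdecay : ∀ k : ℕ, 1 ≤ k → x k ≤ A * (k : ℝ) ^ (-γ)) :
    ∃ C : ℝ, 0 < C ∧ ∀ m : ℕ, 1 ≤ m →
      Summable (fun k : ℕ => Real.sqrt (x (m + k) - x (m + k + 1))) ∧
      ∑' k : ℕ, Real.sqrt (x (m + k) - x (m + k + 1)) ≤ C * (m : ℝ) ^ ((1 - γ) / 2) := by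
  have hp : (1 - γ) / 2 < 0 := by linarith
  have hr : (2 : ℝ) ^ ((1 - γ) / 2) < 1 := rpow_lt_one_of_one_lt_of_neg one_lt_two hp
  refine ⟨√A / (1 - 2 ^ ((1 - γ) / 2)), div_pos (sqrt_pos.2 hA) (by linarith), fun m hm => ?_⟩
  have hnonneg : ∀ k, 0 ≤ √(x (m + k) - x (m + k + 1)) := fun _ => sqrt_nonneg _
  have hpartial := fun N => sum_range_le_of_dyadic_block_le (a := fun k => √(x k - x (k + 1)))
    (fun _ => sqrt_nonneg _) hp
    (fun n hn => hmono.sum_range_sqrt_sub_succ_le_sqrt_mul_rpow hpos hA.le hn (hdecay n hn)) N hm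
  exact ⟨summable_of_sum_range_le hnonneg hpartial, tsum_le_of_sum_range_le hnonneg hpartial⟩
end
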